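/- arXiv:2501.10082 — 5 statements merged into one kernel-verified Lean document; each statement's English description precedes it below -/
import Mathlib

section
/- Let M be a pointed metric space, let γ ∈ (0,1], and let A be a subset of M̃. Then A is γ-cyclically monotonic if and only if there exists a function f in the closed unit ball of Lip_0(M) satisfying f(m_{x,y}) ≥ γ for all (x,y) ∈ A. -/
/-- The set `M̃ = {(x,y) : x ≠ y}` as a subtype. -/
def Mt (M : Type*) : Type _ := {p : M × M // p.1 ≠ p.2}

variable {M : Type*} [MetricSpace M]

/-- The de Leeuw quotient `f(m_{x,y}) = (f x - f y)/d(x,y)`. -/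
noncomputable def mQ (f : M → ℝ) (p : Mt M) : ℝ :=
  (f p.1.1 - f p.1.2) / dist p.1.1 p.1.2

/-- `A ⊆ M̃` is `γ`-cyclically monotonic. -/
def GammaCM (γ : ℝ) (A : Set (Mt M)) : Prop :=
  ∀ (n : ℕ) (p : Fin (n + 1) → Mt M), (∀ i, p i ∈ A) →
    0 ≤ ∑ i : Fin (n + 1),
      min (dist (p i).1.1 (p (i + 1)).1.2 - γ * dist (p i).1.1 (p i).1.2)
          (dist (p i).1.2 (p (i + 1)).1.2)

/-- `A ⊆ M̃` is cyclically monotonic. -/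
def CyclMono (A : Set (Mt M)) : Prop :=
  ∀ (n : ℕ) (p : Fin (n + 1) → Mt M), (∀ i, p i ∈ A) →
    ∑ i : Fin (n + 1), dist (p i).1.1 (p i).1.2 ≤
      ∑ i : Fin (n + 1), dist (p i).1.1 (p (i + 1)).1.2

/-- `π(A)`. -/
def piA (A : Set (Mt M)) : Set M := {z | ∃ p ∈ A, p.1.1 = z ∨ p.1.2 = z}

/-- The pair `(u,v)` as an element of `M̃`. -/
def pr {M : Type*} (u v : M) (h : u ≠ v) : Mt M := ⟨(u, v), h⟩

/-- The "cost" of going from the pair `q = (x,y)` to the point `v`. -/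
noncomputable def cst (γ : ℝ) (q : Mt M) (v : M) : ℝ :=
  min (dist q.1.1 v - γ * dist q.1.1 q.1.2) (dist q.1.2 v)

lemma cst_le (γ : ℝ) (q : Mt M) (v w : M) :
    cst γ q v ≤ cst γ q w + dist w v := by
  have h1 : dist q.1.1 v - γ * dist q.1.1 q.1.2 ≤
      (dist q.1.1 w - γ * dist q.1.1 q.1.2) + dist w v := by
    have := dist_triangle q.1.1 w v; linarith
  have h2 : dist q.1.2 v ≤ dist q.1.2 w + dist w v := dist_triangle _ _ _
  have : cst γ q w + dist w v =
      min ((dist q.1.1 w - γ * dist q.1.1 q.1.2) + dist w v)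
        (dist q.1.2 w + dist w v) := (min_add_add_right _ _ _).symm
  rw [this]
  exact le_min ((min_le_left _ _).trans h1) ((min_le_right _ _).trans h2)

/-- Total cost of a chain of pairs with final target `v`. -/
noncomputable def costF (γ : ℝ) {n : ℕ} (p : Fin (n + 1) → Mt M) (v : M) : ℝ :=
  (∑ i : Fin n, cst γ (p i.castSucc) ((p i.succ).1.2)) + cst γ (p (Fin.last n)) v

lemma costF_le (γ : ℝ) {n : ℕ} (p : Fin (n + 1) → Mt M) (v w : M) :
    costF γ p v ≤ costF γ p w + dist w v := by
  unfold costF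
  have := cst_le γ (p (Fin.last n)) v w
  linarith

lemma costF_cycle {γ : ℝ} {A : Set (Mt M)} (hA : GammaCM γ A) {n : ℕ}
    (p : Fin (n + 1) → Mt M) (hp : ∀ i, p i ∈ A) :
    0 ≤ costF γ p ((p 0).1.2) := by
  have h := hA n p hp
  have heq : ∑ i : Fin (n + 1),
      min (dist (p i).1.1 (p (i + 1)).1.2 - γ * dist (p i).1.1 (p i).1.2)
          (dist (p i).1.2 (p (i + 1)).1.2) = costF γ p ((p 0).1.2) := by
    unfold costF
    rw [Fin.sum_univ_castSucc]
    congr 1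
    · refine Finset.sum_congr rfl fun i _ => ?_
      rw [Fin.coeSucc_eq_succ]
      rfl
    · rw [Fin.last_add_one]
      rfl
  linarith [heq ▸ h]

lemma costF_snoc (γ : ℝ) {n : ℕ} (p : Fin (n + 1) → Mt M) (q : Mt M) (v : M) :
    costF γ (Fin.snoc p q) v = costF γ p q.1.2 + cst γ q v := by
  unfold costF
  rw [Fin.sum_univ_castSucc]
  simp only [Fin.snoc_castSucc, Fin.succ_castSucc, Fin.succ_last, Fin.snoc_last]

theorem stmt0 (base : M) {γ : ℝ} (hγ0 : 0 < γ) (hγ1 : γ ≤ 1) (A : Set (Mt M)) :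
    GammaCM γ A ↔
      ∃ f : M → ℝ, f base = 0 ∧ LipschitzWith 1 f ∧ ∀ p ∈ A, γ ≤ mQ f p := by
  constructor
  · intro hGC
    rcases A.eq_empty_or_nonempty with hAe | ⟨p0, hp0⟩
    · refine ⟨fun _ => 0, rfl, ?_, ?_⟩
      · apply LipschitzWith.of_dist_le_mul
        intro x y
        simp [dist_nonneg]
      · intro p hp
        rw [hAe] at hp
        exact absurd hp (Set.notMem_empty p)
    · -- A nonempty: infimum over chains starting with p0
      set y0 := p0.1.2 with hy0
      set S : M → Set ℝ := fun v =>
        {r | ∃ (n : ℕ) (p : Fin (n + 1) → Mt M),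
          p 0 = p0 ∧ (∀ i, p i ∈ A) ∧ costF γ p v = r} with hS
      have hSne : ∀ v, (S v).Nonempty := by
        intro v
        exact ⟨costF γ (fun _ => p0) v, 0, fun _ => p0, rfl, fun _ => hp0, rfl⟩
      have hlow : ∀ v, ∀ r ∈ S v, -dist y0 v ≤ r := by
        rintro v r ⟨n, p, hp00, hpA, rfl⟩
        have h0 : 0 ≤ costF γ p ((p 0).1.2) := costF_cycle hGC p hpA
        have h1 : costF γ p ((p 0).1.2) ≤ costF γ p v + dist v ((p 0).1.2) :=
          costF_le γ p _ v
        rw [hp00] at h0 h1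
        rw [dist_comm] at h1
        linarith
      have hbdd : ∀ v, BddBelow (S v) := fun v => ⟨-dist y0 v, fun r hr => hlow v r hr⟩
      set g : M → ℝ := fun v => sInf (S v) with hg
      have hgle : ∀ v w, g v ≤ g w + dist w v := by
        intro v w
        have : g v - dist w v ≤ g w := by
          apply le_csInf (hSne w)
          rintro r ⟨n, p, hp00, hpA, rfl⟩
          have hm : costF γ p v ∈ S v := ⟨n, p, hp00, hpA, rfl⟩
          have h1 := csInf_le (hbdd v) hm
          have h2 := costF_le γ p v w
          linarith
        linarith
      have hgkey : ∀ q ∈ A, g q.1.1 ≤ g q.1.2 - γ * dist q.1.1 q.1.2 := by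
        intro q hq
        have : g q.1.1 + γ * dist q.1.1 q.1.2 ≤ g q.1.2 := by
          apply le_csInf (hSne q.1.2)
          rintro r ⟨n, p, hp00, hpA, rfl⟩
          have hsnoc := costF_snoc γ p q q.1.1
          have hcq : cst γ q q.1.1 = -(γ * dist q.1.1 q.1.2) := by
            unfold cst
            rw [dist_self]
            rw [min_eq_left]
            · ring
            have : 0 ≤ dist q.1.2 q.1.1 := dist_nonneg
            have : 0 ≤ γ * dist q.1.1 q.1.2 :=
              mul_nonneg hγ0.le dist_nonneg
            linarith
          have hmem : costF γ (Fin.snoc p q) q.1.1 ∈ S q.1.1 := by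
            refine ⟨n + 1, Fin.snoc p q, ?_, ?_, rfl⟩
            · have : ((0 : Fin (n + 2))) = Fin.castSucc (0 : Fin (n + 1)) := by
                simp
              rw [this, Fin.snoc_castSucc, hp00]
            · intro i
              refine Fin.lastCases ?_ ?_ i
              · rw [Fin.snoc_last]; exact hq
              · intro j; rw [Fin.snoc_castSucc]; exact hpA j
          have h1 := csInf_le (hbdd q.1.1) hmem
          rw [hsnoc, hcq] at h1
          linarith
        linarith
      refine ⟨fun v => g base - g v, by simp, ?_, ?_⟩
      · apply LipschitzWith.of_dist_le_mul
        intro x y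
        rw [Real.dist_eq, NNReal.coe_one, one_mul]
        have h1 := hgle x y
        have h2 := hgle y x
        have h3 : dist y x = dist x y := dist_comm _ _
        rw [abs_sub_le_iff]
        constructor <;> linarith
      · intro q hq
        have hd : 0 < dist q.1.1 q.1.2 := dist_pos.mpr q.2
        rw [mQ, le_div_iff₀ hd]
        have := hgkey q hq
        linarith
  · rintro ⟨f, hf0, hfl, hfA⟩ n p hp
    have hterm : ∀ i : Fin (n + 1),
        f (p i).1.2 - f (p (i + 1)).1.2 ≤
          min (dist (p i).1.1 (p (i + 1)).1.2 - γ * dist (p i).1.1 (p i).1.2)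
              (dist (p i).1.2 (p (i + 1)).1.2) := by
      intro i
      have hd : 0 < dist (p i).1.1 (p i).1.2 := dist_pos.mpr (p i).2
      have h1 : γ * dist (p i).1.1 (p i).1.2 ≤ f (p i).1.1 - f (p i).1.2 := by
        have := hfA (p i) (hp i)
        rw [mQ, le_div_iff₀ hd] at this
        exact this
      have h2 : f (p i).1.1 - f (p (i + 1)).1.2 ≤ dist (p i).1.1 (p (i + 1)).1.2 := by
        have := hfl.dist_le_mul (p i).1.1 (p (i + 1)).1.2
        rw [Real.dist_eq, NNReal.coe_one, one_mul] at this
        exact (abs_le.mp this).2.trans (le_refl _) |>.trans (le_refl _)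
      have h3 : f (p i).1.2 - f (p (i + 1)).1.2 ≤ dist (p i).1.2 (p (i + 1)).1.2 := by
        have := hfl.dist_le_mul (p i).1.2 (p (i + 1)).1.2
        rw [Real.dist_eq, NNReal.coe_one, one_mul] at this
        exact le_trans (le_abs_self _) this
      exact le_min (by linarith) h3
    have htel : ∑ i : Fin (n + 1), (f (p i).1.2 - f (p (i + 1)).1.2) = 0 := by
      rw [Finset.sum_sub_distrib]
      have : ∑ i : Fin (n + 1), f (p (i + 1)).1.2 = ∑ i : Fin (n + 1), f (p i).1.2 :=
        Equiv.sum_comp (Equiv.addRight (1 : Fin (n + 1))) (fun i => f (p i).1.2)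
      rw [this, sub_self]
    calc (0 : ℝ) = ∑ i : Fin (n + 1), (f (p i).1.2 - f (p (i + 1)).1.2) := htel.symm
      _ ≤ _ := Finset.sum_le_sum fun i _ => hterm i
end

section
/- Let M be a pointed metric space and let Λ be a bounded linear functional on ℓ∞(M̃). Then there exists a positive bounded linear functional Λ' on ℓ∞(M̃) satisfying Λ'∘Φ = Λ∘Φ and ‖Λ'‖ = ‖Λ‖. Consequently, every bounded linear functional F on Lip_0(M) has the form F = Λ'∘Φ for some positive Λ' with ‖Λ'‖ = ‖F‖. -/
open scoped ENNReal

variable {M : Type*} [MetricSpace M]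

/-- `ℓ∞(M̃)`. -/
noncomputable abbrev ellInfty (M : Type*) : Type _ := ↥(lp (fun _ : Mt M => ℝ) ∞)

/-- A bounded linear functional on `ℓ∞(M̃)` is positive if it is nonnegative on
nonnegative functions. -/
def IsPositive {M : Type*} (Λ : ellInfty M →L[ℝ] ℝ) : Prop :=
  ∀ h : ellInfty M, (∀ p : Mt M, 0 ≤ h p) → 0 ≤ Λ h

/-- The indicator function of `A ⊆ M̃` as an element of `ℓ∞(M̃)`. -/
noncomputable def indicLp {M : Type*} (A : Set (Mt M)) : ellInfty M :=
  ⟨A.indicator 1, memℓp_infty (by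
    refine ⟨1, ?_⟩
    rintro r ⟨p, rfl⟩
    by_cases hp : p ∈ A <;>
      simp [Set.indicator_apply, hp])⟩

/-- The image of `Lip₀(M)` in `ℓ∞(M̃)` under the de Leeuw embedding `Φ`;
`Lip₀(M)` itself is identified with this submodule, carrying the induced
(Lipschitz) norm, and `Φ` is then the inclusion `(LipO M base).subtypeL`. -/
noncomputable def LipO (M : Type*) [MetricSpace M] (base : M) :
    Submodule ℝ (ellInfty M) where
  carrier := {g | ∃ f : M → ℝ, f base = 0 ∧
    ∀ p : Mt M, g p = (f p.1.1 - f p.1.2) / dist p.1.1 p.1.2}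
  add_mem' := by
    rintro g₁ g₂ ⟨f₁, hf₁, h₁⟩ ⟨f₂, hf₂, h₂⟩
    refine ⟨f₁ + f₂, by simp [hf₁, hf₂], fun p => ?_⟩
    have : (⇑(g₁ + g₂) : Mt M → ℝ) = ⇑g₁ + ⇑g₂ := lp.coeFn_add g₁ g₂
    rw [this]
    simp only [Pi.add_apply, h₁ p, h₂ p]
    ring
  zero_mem' := by
    refine ⟨0, rfl, fun p => ?_⟩
    have : (⇑(0 : ellInfty M) : Mt M → ℝ) = 0 := lp.coeFn_zero _ _
    simp [this]
  smul_mem' := by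
    rintro c g ⟨f, hf, h⟩
    refine ⟨c • f, by simp [hf], fun p => ?_⟩
    have : (⇑(c • g) : Mt M → ℝ) = c • ⇑g := lp.coeFn_smul c g
    rw [this]
    simp only [Pi.smul_apply, smul_eq_mul, h p]
    ring

open Classical in
/-- Evaluation of (the function represented by) `g ∈ Lip₀(M)` at `x`. -/
noncomputable def evalAux (base x : M) (g : ↥(LipO M base)) : ℝ :=
  if h : x = base then 0
  else ((g : ellInfty M) : Mt M → ℝ) ⟨(x, base), h⟩ * dist x base

/-- The evaluation functional `δ_x : Lip₀(M) → ℝ`, `δ_x(f) = f(x)`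
(recovering `f` from its de Leeuw transform). -/
noncomputable def deltaF (base x : M) : ↥(LipO M base) →L[ℝ] ℝ :=
  LinearMap.mkContinuous
    { toFun := evalAux base x
      map_add' := fun g₁ g₂ => by
        unfold evalAux
        split_ifs with h
        · simp
        · simp only [Submodule.coe_add, lp.coeFn_add, Pi.add_apply]
          erw [Pi.add_apply]
          ring
      map_smul' := fun c g => by
        unfold evalAux
        split_ifs with h
        · simp
        · simp only [Submodule.coe_smul, lp.coeFn_smul, Pi.smul_apply,
            smul_eq_mul, RingHom.id_apply]
          erw [Pi.smul_apply, smul_eq_mul]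
          ring }
    (dist x base)
    (by
      intro g
      simp only [LinearMap.coe_mk, AddHom.coe_mk]
      unfold evalAux
      split_ifs with h
      · subst h
        rw [norm_zero, dist_self, zero_mul]
      · have h1 : ‖((g : ellInfty M) : Mt M → ℝ) ⟨(x, base), h⟩‖ ≤ ‖(g : ellInfty M)‖ :=
          lp.norm_apply_le_norm ENNReal.top_ne_zero (g : ellInfty M) ⟨(x, base), h⟩
        have h2 : ‖(g : ellInfty M)‖ = ‖g‖ := rfl
        calc ‖((g : ellInfty M) : Mt M → ℝ) ⟨(x, base), h⟩ * dist x base‖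
            = ‖((g : ellInfty M) : Mt M → ℝ) ⟨(x, base), h⟩‖ * dist x base := by
              rw [norm_mul, Real.norm_eq_abs (dist x base), abs_of_nonneg dist_nonneg]
          _ ≤ ‖g‖ * dist x base := by
              exact mul_le_mul_of_nonneg_right (h2 ▸ h1) dist_nonneg
          _ = dist x base * ‖g‖ := mul_comm _ _)

/-- The Lipschitz-free space `F(M)`: the closed linear span of the evaluation
functionals inside the dual of `Lip₀(M)`. -/
noncomputable def FreeSpan (M : Type*) [MetricSpace M] (base : M) :
    Submodule ℝ (↥(LipO M base) →L[ℝ] ℝ) :=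
  Submodule.span ℝ (Set.range (deltaF base))

/-- The Lipschitz-free space `F(M)`: the closed linear span of the evaluation
functionals inside the dual of `Lip₀(M)`. -/
noncomputable def FreeSp (M : Type*) [MetricSpace M] (base : M) :
    Set (↥(LipO M base) →L[ℝ] ℝ) :=
  closure (FreeSpan M base : Set (↥(LipO M base) →L[ℝ] ℝ))

/-- The weak-star topology `σ(Lip₀(M), F(M))` on `Lip₀(M)`. -/
noncomputable def wstar (M : Type*) [MetricSpace M] (base : M) :
    TopologicalSpace ↥(LipO M base) :=
  TopologicalSpace.induced
    (fun g => fun μ : FreeSp M base => (μ : ↥(LipO M base) →L[ℝ] ℝ) g)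
    inferInstance

variable {M : Type*} [MetricSpace M]

/-!
Hahn–Banach with the sublinear functional `h ↦ c · sup_p h(p)` on `ℓ∞(M̃)`, `c ≥ ‖F‖`. It
dominates `F` on `Lip₀(M)` because `Φf(y,x) = -Φf(x,y)` makes `sup Φf = ‖Φf‖∞`. An extension
`Λ'` dominated by it is positive (`-Λ'(h) = Λ'(-h) ≤ c · sup(-h) ≤ 0` for `h ≥ 0`), satisfies
`|Λ'(h)| ≤ c‖h‖`, and `Λ'(1) ≥ -c · sup(-1) = c`, so `‖Λ'‖ = c`.
-/

section LInfty

variable {ι : Type*}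

noncomputable def lpSup (h : lp (fun _ : ι => ℝ) ∞) : ℝ := ⨆ i, h i

theorem le_lpSup (h : lp (fun _ : ι => ℝ) ∞) (i : ι) : h i ≤ lpSup h :=
  le_ciSup ⟨‖h‖, by
    rintro _ ⟨j, rfl⟩
    exact (le_abs_self _).trans (lp.norm_apply_le_norm ENNReal.top_ne_zero h j)⟩ i

theorem lpSup_le_norm (h : lp (fun _ : ι => ℝ) ∞) : lpSup h ≤ ‖h‖ :=
  Real.iSup_le (fun i => (le_abs_self _).trans (lp.norm_apply_le_norm ENNReal.top_ne_zero h i))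
    (norm_nonneg h)

theorem lpSup_smul {a : ℝ} (ha : 0 ≤ a) (h : lp (fun _ : ι => ℝ) ∞) :
    lpSup (a • h) = a * lpSup h := by
  simp only [lpSup, lp.coeFn_smul, Pi.smul_apply, smul_eq_mul]
  exact (Real.mul_iSup_of_nonneg ha _).symm

theorem abs_le_mul_norm_of_le_mul_lpSup {g : lp (fun _ : ι => ℝ) ∞ →ₗ[ℝ] ℝ} {c : ℝ}
    (hg : ∀ h, g h ≤ c * lpSup h) (hc : 0 ≤ c) (h : lp (fun _ : ι => ℝ) ∞) :
    |g h| ≤ c * ‖h‖ := by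
  have hneg := hg (-h)
  rw [map_neg] at hneg
  have := mul_le_mul_of_nonneg_left (lpSup_le_norm h) hc
  have := mul_le_mul_of_nonneg_left ((lpSup_le_norm (-h)).trans_eq (norm_neg h)) hc
  exact abs_le.2 ⟨by linarith [hg h], by linarith [hg h]⟩

variable [Nonempty ι]

theorem lpSup_add_le (h k : lp (fun _ : ι => ℝ) ∞) : lpSup (h + k) ≤ lpSup h + lpSup k :=
  ciSup_le fun i => by
    simpa only [lp.coeFn_add, Pi.add_apply] using add_le_add (le_lpSup h i) (le_lpSup k i)

theorem lpSup_nonpos {h : lp (fun _ : ι => ℝ) ∞} (hh : ∀ i, h i ≤ 0) : lpSup h ≤ 0 :=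
  ciSup_le hh

theorem lpSup_neg_one : lpSup (-1 : lp (fun _ : ι => ℝ) ∞) = -1 := by
  simp only [lpSup, lp.coeFn_neg, lp.infty_coeFn_one, Pi.neg_apply, Pi.one_apply, ciSup_const]

theorem exists_extension_le_mul_lpSup (S : Submodule ℝ (lp (fun _ : ι => ℝ) ∞))
    (hS : ∀ x ∈ S, ‖x‖ ≤ lpSup x) (F : S →L[ℝ] ℝ) {c : ℝ} (hc : ‖F‖ ≤ c) :
    ∃ g : lp (fun _ : ι => ℝ) ∞ →ₗ[ℝ] ℝ, (∀ x : S, g x = F x) ∧ ∀ h, g h ≤ c * lpSup h := by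
  have hc0 : 0 ≤ c := (norm_nonneg F).trans hc
  refine exists_extension_of_le_sublinear ⟨S, (F : S →ₗ[ℝ] ℝ)⟩ (fun h => c * lpSup h)
    (fun a ha h => by rw [lpSup_smul ha.le]; ring)
    (fun h k => by nlinarith [lpSup_add_le h k]) fun x => ?_
  calc F x ≤ ‖F‖ * ‖x‖ := (le_abs_self _).trans (F.le_opNorm x)
    _ ≤ c * lpSup (x : lp (fun _ : ι => ℝ) ∞) :=
      mul_le_mul hc (hS x x.2) (norm_nonneg _) hc0

theorem nonneg_of_le_mul_lpSup {g : lp (fun _ : ι => ℝ) ∞ →ₗ[ℝ] ℝ} {c : ℝ}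
    (hg : ∀ h, g h ≤ c * lpSup h) (hc : 0 ≤ c) {h : lp (fun _ : ι => ℝ) ∞}
    (hh : ∀ i, 0 ≤ h i) : 0 ≤ g h := by
  have hneg := hg (-h)
  rw [map_neg] at hneg
  have : lpSup (-h) ≤ 0 := lpSup_nonpos fun i => by simpa using hh i
  nlinarith

theorem le_apply_one_of_le_mul_lpSup {g : lp (fun _ : ι => ℝ) ∞ →ₗ[ℝ] ℝ} {c : ℝ}
    (hg : ∀ h, g h ≤ c * lpSup h) : c ≤ g 1 := by
  have := hg (-1)
  rw [map_neg, lpSup_neg_one] at this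
  linarith

theorem exists_nonneg_extension_norm_eq (S : Submodule ℝ (lp (fun _ : ι => ℝ) ∞))
    (hS : ∀ x ∈ S, ‖x‖ ≤ lpSup x) (F : S →L[ℝ] ℝ) {c : ℝ} (hc : ‖F‖ ≤ c) :
    ∃ Λ : lp (fun _ : ι => ℝ) ∞ →L[ℝ] ℝ, (∀ h, (∀ i, 0 ≤ h i) → 0 ≤ Λ h) ∧
      Λ.comp S.subtypeL = F ∧ ‖Λ‖ = c := by
  have hc0 : 0 ≤ c := (norm_nonneg F).trans hc
  obtain ⟨g, hgF, hg⟩ := exists_extension_le_mul_lpSup S hS F hc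
  have hbound := abs_le_mul_norm_of_le_mul_lpSup hg hc0
  refine ⟨g.mkContinuous c hbound, fun h => nonneg_of_le_mul_lpSup hg hc0,
    ContinuousLinearMap.ext hgF, le_antisymm (g.mkContinuous_norm_le hc0 hbound) ?_⟩
  calc c ≤ g 1 := le_apply_one_of_le_mul_lpSup hg
    _ ≤ ‖g.mkContinuous c hbound‖ * ‖(1 : lp (fun _ : ι => ℝ) ∞)‖ :=
      (le_abs_self _).trans ((g.mkContinuous c hbound).le_opNorm 1)
    _ = ‖g.mkContinuous c hbound‖ := by rw [norm_one, mul_one]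

end LInfty

def Mt.swap (p : Mt M) : Mt M := ⟨(p.1.2, p.1.1), p.2.symm⟩

theorem LipO.apply_swap (base : M) {g : ellInfty M} (hg : g ∈ LipO M base) (p : Mt M) :
    g p.swap = -g p := by
  obtain ⟨f, -, hf⟩ := hg
  rw [hf, hf]
  show (f p.1.2 - f p.1.1) / dist p.1.2 p.1.1 = _
  rw [dist_comm]
  ring

/-- By antisymmetry of de Leeuw transforms, `sup |g| = sup g` on `Lip₀(M)`. -/
theorem LipO.norm_le_lpSup [Nonempty (Mt M)] (base : M) {g : ellInfty M}
    (hg : g ∈ LipO M base) : ‖g‖ ≤ lpSup g :=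
  lp.norm_le_of_forall_le' _ fun p => abs_le.2
    ⟨by linarith [LipO.apply_swap base hg p, le_lpSup g p.swap], le_lpSup g p⟩

theorem stmt1 (base : M) (Λ : ellInfty M →L[ℝ] ℝ) :
    (∃ Λ' : ellInfty M →L[ℝ] ℝ, IsPositive Λ' ∧
        Λ'.comp (LipO M base).subtypeL = Λ.comp (LipO M base).subtypeL ∧
        ‖Λ'‖ = ‖Λ‖) ∧
    ∀ F : ↥(LipO M base) →L[ℝ] ℝ, ∃ Λ' : ellInfty M →L[ℝ] ℝ, IsPositive Λ' ∧
        Λ'.comp (LipO M base).subtypeL = F ∧ ‖Λ'‖ = ‖F‖ := by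
  rcases isEmpty_or_nonempty (Mt M) with _ | _
  · refine ⟨⟨Λ, fun h _ => by rw [Subsingleton.elim h 0, map_zero], rfl, rfl⟩,
      fun F => ⟨0, fun h _ => le_rfl, Subsingleton.elim _ _, by simp [Subsingleton.elim F 0]⟩⟩
  · have hLip : ∀ g ∈ LipO M base, ‖g‖ ≤ lpSup g := fun _ => LipO.norm_le_lpSup base
    refine ⟨exists_nonneg_extension_norm_eq _ hLip _ ?_,
      fun F => exists_nonneg_extension_norm_eq _ hLip F le_rfl⟩
    exact (Λ.opNorm_comp_le _).trans (mul_le_of_le_one_right (norm_nonneg Λ)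
      (Submodule.norm_subtypeL_le _))
end

section
/- Let n ∈ ℕ and let M be a metric space with d(x,y) ∈ {0,1,…,n} for all x,y ∈ M. Let μ be a bounded, nonnegative, finitely additive set function defined on all subsets of M̃ (i.e., μ(∅) = 0 and μ(A ∪ B) = μ(A) + μ(B) whenever A, B are disjoint), let γ ∈ (0,1), and let A be a γ-cyclically monotonic subset of M̃. Then there exists a cyclically monotonic subset B of A with μ(B) ≥ μ(A) − 2n(1−γ)·μ(M̃). -/
variable {M : Type*} [MetricSpace M]

open Finset Function

section AdditiveContent

variable {X : Type*}

structure IsAdditiveContent (μ : Set X → ℝ) : Prop where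
  nonneg : ∀ A, 0 ≤ μ A
  empty : μ ∅ = 0
  union : ∀ A B, Disjoint A B → μ (A ∪ B) = μ A + μ B

namespace IsAdditiveContent

variable {μ : Set X → ℝ} (hμ : IsAdditiveContent μ)
include hμ

theorem inter_add_diff (A B : Set X) : μ (A ∩ B) + μ (A \ B) = μ A := by
  rw [← hμ.union _ _ Set.disjoint_sdiff_inter.symm, Set.inter_union_sdiff]

theorem mono {A B : Set X} (hAB : A ⊆ B) : μ A ≤ μ B := by
  rw [← hμ.inter_add_diff B A, Set.inter_eq_right.mpr hAB]
  linarith [hμ.nonneg (B \ A)]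

theorem sum_le_univ {ι : Type*} [Fintype ι] {D : ι → Set X} (hD : Pairwise (Disjoint on D)) :
    ∑ j, μ (D j) ≤ μ Set.univ := by
  have hring : MeasureTheory.IsSetRing (Set.univ : Set (Set X)) :=
    ⟨trivial, fun _ _ _ _ => trivial, fun _ _ _ _ => trivial⟩
  let m := hring.addContent_of_union μ hμ.empty fun _ _ => hμ.union _ _
  calc ∑ j, μ (D j) = μ (⋃ j, D j) :=
        (MeasureTheory.addContent_iUnion (m := m) (fun _ => trivial) hD trivial).symm
    _ ≤ μ Set.univ := hμ.mono (Set.subset_univ _)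

theorem sum_le_mul_univ_of_card_le {ι : Type*} [Fintype ι] [LinearOrder ι] (m : ℕ)
    (S : ι → Set X) (hS : ∀ x (t : Finset ι), (∀ j ∈ t, x ∈ S j) → #t ≤ m) :
    ∑ j, μ (S j) ≤ m * μ Set.univ := by
  induction m generalizing S with
  | zero =>
    have hempty (j : ι) : S j = ∅ :=
      Set.eq_empty_of_forall_notMem fun x hx => by simpa using hS x {j} (by simpa using hx)
    simp [hempty, hμ.empty]
  | succ m ih =>
    -- split `S j` into the part not covered by earlier sets and the part that is
    let U (j : ι) : Set X := ⋃ i < j, S i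
    have hfirst : ∑ j, μ (S j \ U j) ≤ μ Set.univ := by
      refine hμ.sum_le_univ fun i j hij => Set.disjoint_left.mpr fun x hi hj => ?_
      rcases hij.lt_or_gt with h | h
      · exact hj.2 (Set.mem_biUnion h hi.1)
      · exact hi.2 (Set.mem_biUnion h hj.1)
    have hrest : ∑ j, μ (S j ∩ U j) ≤ m * μ Set.univ := by
      refine ih _ fun x t ht => ?_
      obtain rfl | htne := t.eq_empty_or_nonempty
      · simp
      obtain ⟨i, hi, hxi⟩ := Set.mem_iUnion₂.mp (ht _ (t.min'_mem htne)).2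
      have hit : i ∉ t := fun hit => (t.min'_le i hit).not_gt hi
      have := hS x (insert i t) (by
        simpa [Finset.forall_mem_insert, hxi] using fun j hj => (ht j hj).1)
      rw [Finset.card_insert_of_notMem hit] at this
      omega
    have hsplit : ∑ j, μ (S j) = ∑ j, μ (S j ∩ U j) + ∑ j, μ (S j \ U j) := by
      rw [← Finset.sum_add_distrib]
      exact Finset.sum_congr rfl fun j _ => (hμ.inter_add_diff _ _).symm
    push_cast
    linarith

end IsAdditiveContent

end AdditiveContent

section Potential

variable (γ : ℝ)

/-- The summand of `GammaCM`: `stepCost γ (p i) (p (i + 1)).1.2`. -/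
noncomputable def stepCost (p : Mt M) (z : M) : ℝ :=
  min (dist p.1.1 z - γ * dist p.1.1 p.1.2) (dist p.1.2 z)

/-- The `GammaCM` sum along an open chain `q 0, …, q m`, closed up at the point `z`. -/
noncomputable def chainCost {m : ℕ} (q : Fin (m + 1) → Mt M) (z : M) : ℝ :=
  ∑ i : Fin m, stepCost γ (q i.castSucc) (q i.succ).1.2 + stepCost γ (q (Fin.last m)) z

theorem stepCost_le_add_dist (p : Mt M) (z w : M) :
    stepCost γ p z ≤ stepCost γ p w + dist w z := by
  rw [stepCost, stepCost, ← min_add_add_right]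
  gcongr
  · linarith [dist_triangle p.1.1 w z]
  · exact dist_triangle _ _ _

theorem chainCost_le_add_dist {m : ℕ} (q : Fin (m + 1) → Mt M) (z w : M) :
    chainCost γ q z ≤ chainCost γ q w + dist w z := by
  simp only [chainCost]
  linarith [stepCost_le_add_dist γ (q (Fin.last m)) z w]

theorem chainCost_self {m : ℕ} (q : Fin (m + 1) → Mt M) :
    chainCost γ q (q 0).1.2 = ∑ i : Fin (m + 1), stepCost γ (q i) (q (i + 1)).1.2 := by
  rw [Fin.sum_univ_castSucc, chainCost, Fin.last_add_one]
  simp only [Fin.coeSucc_eq_succ]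

theorem chainCost_snoc {m : ℕ} (q : Fin (m + 1) → Mt M) (r : Mt M) (z : M) :
    chainCost γ (Fin.snoc q r : Fin (m + 2) → Mt M) z = chainCost γ q r.1.2 + stepCost γ r z := by
  simp only [chainCost, Fin.sum_univ_castSucc, Fin.succ_castSucc, Fin.snoc_castSucc,
    Fin.succ_last, Fin.snoc_last]

def chainCosts (A : Set (Mt M)) (p₀ : Mt M) (z : M) : Set ℝ :=
  {v | ∃ (m : ℕ) (q : Fin (m + 1) → Mt M), (∀ i, q i ∈ A) ∧ q 0 = p₀ ∧ chainCost γ q z = v}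

theorem sInf_le_sInf_add {S T : Set ℝ} (hS : BddBelow S) (hT : T.Nonempty) {c : ℝ}
    (h : ∀ v ∈ T, ∃ u ∈ S, u ≤ v + c) : sInf S ≤ sInf T + c := by
  rw [← sub_le_iff_le_add]
  refine le_csInf hT fun v hv => ?_
  obtain ⟨u, hu, huv⟩ := h v hv
  linarith [csInf_le hS hu]

variable {γ}

/-- Rockafellar's construction: minus the infimal chain cost is a potential. -/
theorem GammaCM.exists_potential {A : Set (Mt M)} (hA : GammaCM γ A) :
    ∃ h : M → ℝ, (∀ x y, h x - h y ≤ dist x y) ∧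
      ∀ p ∈ A, γ * dist p.1.1 p.1.2 ≤ h p.1.1 - h p.1.2 := by
  obtain rfl | ⟨p₀, hp₀⟩ := A.eq_empty_or_nonempty
  · exact ⟨0, by simp, by simp⟩
  let S := chainCosts γ A p₀
  have hne (z : M) : (S z).Nonempty := ⟨_, 0, fun _ => p₀, fun _ => hp₀, rfl, rfl⟩
  -- closing a chain from `p₀` at `p₀.1.2` gives a cycle, of nonnegative cost
  have hbdd (z : M) : BddBelow (S z) := by
    refine ⟨-dist z p₀.1.2, ?_⟩
    rintro _ ⟨m, q, hqA, rfl, rfl⟩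
    have : 0 ≤ chainCost γ q (q 0).1.2 := (chainCost_self γ q).symm ▸ hA m q hqA
    linarith [chainCost_le_add_dist γ q (q 0).1.2 z]
  refine ⟨fun z => -sInf (S z), fun z w => ?_, fun r hr => ?_⟩
  · have := sInf_le_sInf_add (hbdd w) (hne z) fun v ⟨m, q, hqA, hq0, hv⟩ =>
      ⟨chainCost γ q w, ⟨m, q, hqA, hq0, rfl⟩, hv ▸ chainCost_le_add_dist γ q w z⟩
    dsimp only
    linarith
  · have := sInf_le_sInf_add (hbdd r.1.1) (hne r.1.2) (c := -(γ * dist r.1.1 r.1.2))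
      fun v ⟨m, q, hqA, hq0, hv⟩ => by
        refine ⟨_, ⟨m + 1, Fin.snoc q r, Fin.lastCases (by simpa) (by simpa), ?_, rfl⟩, ?_⟩
        · simpa using hq0
        · rw [chainCost_snoc, hv, stepCost, dist_self, zero_sub]
          exact add_le_add_right (min_le_left _ _) _
    linarith

end Potential

section Calibration

def calibrated (g : M → ℝ) : Set (Mt M) :=
  {p | dist p.1.1 p.1.2 ≤ g p.1.1 - g p.1.2}

theorem cyclMono_of_subset_calibrated {g : M → ℝ} (hg : ∀ x y, g x - g y ≤ dist x y)
    {B : Set (Mt M)} (hB : B ⊆ calibrated g) : CyclMono B := by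
  intro m p hp
  have hshift : ∑ i : Fin (m + 1), g (p (i + 1)).1.2 = ∑ i : Fin (m + 1), g (p i).1.2 :=
    Fintype.sum_equiv (Equiv.addRight 1) _ _ fun _ => rfl
  calc ∑ i, dist (p i).1.1 (p i).1.2
      ≤ ∑ i, (g (p i).1.1 - g (p i).1.2) := sum_le_sum fun i _ => hB (hp i)
    _ = ∑ i, (g (p i).1.1 - g (p (i + 1)).1.2) := by
      rw [sum_sub_distrib, sum_sub_distrib, hshift]
    _ ≤ ∑ i, dist (p i).1.1 (p (i + 1)).1.2 := sum_le_sum fun i _ => hg _ _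

noncomputable def roundedShift (h : M → ℝ) (s : ℝ) (z : M) : ℝ := ⌈h z - s⌉

theorem roundedShift_sub_le (hd : ∀ x y : M, ∃ k : ℕ, dist x y = k) {h : M → ℝ}
    (hh : ∀ x y, h x - h y ≤ dist x y) (s : ℝ) (x y : M) :
    roundedShift h s x - roundedShift h s y ≤ dist x y := by
  obtain ⟨k, hk⟩ := hd x y
  have hxy : h x - s ≤ h y - s + k := by linarith [hk ▸ hh x y]
  have := (Int.ceil_mono hxy).trans_eq (Int.ceil_add_natCast _ _)
  rw [roundedShift, roundedShift, hk]
  exact_mod_cast sub_le_iff_le_add'.mpr this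

/-- `j ↦ K ⌈a - j/K⌉ + j` is injective and maps `t` into `[K (b - k + 1), K (a + 1))`. -/
theorem card_le_of_ceil_lt_ceil_add {K : ℕ} (hK : 0 < K) {a b : ℝ} {k : ℤ} (hba : b - a ≤ k)
    {t : Finset (Fin K)} (ht : ∀ j ∈ t, ⌈b - j / K⌉ < ⌈a - j / K⌉ + k) :
    (#t : ℝ) ≤ K * (a - b + k) + 1 := by
  have hKpos : (0 : ℝ) < K := by exact_mod_cast hK
  let Ψ (j : Fin K) : ℤ := K * ⌈a - j / K⌉ + j
  have hmaps : ∀ j ∈ t, Ψ j ∈ Ico ⌈K * (b - k + 1)⌉ ⌈K * (a + 1)⌉ := by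
    intro j hj
    have hjK : (K : ℝ) * (j / K) = j := by field_simp
    have hlow : b - j / K ≤ ⌈a - j / K⌉ + k - 1 := by
      exact_mod_cast Int.ceil_le.mp (Int.le_sub_one_of_lt (ht j hj))
    have hhigh := Int.ceil_lt_add_one (a - j / K)
    rw [mem_Ico, Int.ceil_le, Int.lt_ceil]
    push_cast [Ψ]
    constructor <;> nlinarith
  have hinj : Set.InjOn Ψ t := by
    intro j _ j' _ hjj'
    have hmod (j : Fin K) : Ψ j % K = j := by
      rw [show Ψ j = K * ⌈a - j / K⌉ + j from rfl, Int.mul_add_emod_self_left]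
      exact Int.emod_eq_of_lt (by positivity) (by exact_mod_cast j.isLt)
    exact Fin.ext (by exact_mod_cast (hmod j).symm.trans (hjj' ▸ hmod j'))
  have hcard := card_le_card_of_injOn Ψ hmaps hinj
  rw [Int.card_Ico] at hcard
  have hcard' : (#t : ℝ) ≤ max ((⌈K * (a + 1)⌉ - ⌈K * (b - k + 1)⌉ : ℤ) : ℝ) 0 := by
    rw [← Int.cast_zero, ← Int.cast_max, ← Int.toNat_eq_max]
    exact_mod_cast hcard
  have hlo := Int.le_ceil (K * (b - k + 1))
  have hhi := Int.ceil_lt_add_one (K * (a + 1))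
  have hnonneg : (0 : ℝ) ≤ K * (a - b + k) := mul_nonneg hKpos.le (by linarith)
  refine hcard'.trans (max_le ?_ (by linarith))
  push_cast
  linarith

end Calibration

theorem card_shifts_not_calibrated_le {n : ℕ} (hd : ∀ x y : M, ∃ k : ℕ, k ≤ n ∧ dist x y = k)
    {γ : ℝ} (hγ1 : γ < 1) {A : Set (Mt M)} {h : M → ℝ} (hh : ∀ x y, h x - h y ≤ dist x y)
    (hhA : ∀ p ∈ A, γ * dist p.1.1 p.1.2 ≤ h p.1.1 - h p.1.2) {K : ℕ} (hK : 0 < K) (p : Mt M)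
    {t : Finset (Fin K)} (ht : ∀ j ∈ t, p ∈ A \ calibrated (roundedShift h (j / K))) :
    (#t : ℝ) ≤ K * ((1 - γ) * n) + 1 := by
  obtain rfl | ⟨j₀, hj₀⟩ := t.eq_empty_or_nonempty
  · simp only [card_empty, CharP.cast_eq_zero]
    positivity
  obtain ⟨k, hkn, hk⟩ := hd p.1.1 p.1.2
  have hγk := hk ▸ hhA p (ht j₀ hj₀).1
  have hbad : ∀ j ∈ t, ⌈h p.1.1 - j / K⌉ < ⌈h p.1.2 - j / K⌉ + (k : ℤ) := by
    intro j hj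
    have := (ht j hj).2
    simp only [calibrated, roundedShift, Set.mem_ofPred_eq, not_le, hk] at this
    exact_mod_cast sub_lt_iff_lt_add'.mp this
  have hcard := card_le_of_ceil_lt_ceil_add hK (by exact_mod_cast hk ▸ hh p.1.1 p.1.2) hbad
  have hkn' : (1 - γ) * k ≤ (1 - γ) * n :=
    mul_le_mul_of_nonneg_left (by exact_mod_cast hkn) (by linarith)
  have hdrop : h p.1.2 - h p.1.1 + k ≤ (1 - γ) * n := by linarith
  refine hcard.trans ?_
  push_cast
  gcongr

theorem exists_shift_measure_diff_calibrated_le {μ : Set (Mt M) → ℝ} (hμ : IsAdditiveContent μ)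
    {n : ℕ} (hn : 0 < n) (hd : ∀ x y : M, ∃ k : ℕ, k ≤ n ∧ dist x y = k)
    {γ : ℝ} (hγ1 : γ < 1) {A : Set (Mt M)} {h : M → ℝ} (hh : ∀ x y, h x - h y ≤ dist x y)
    (hhA : ∀ p ∈ A, γ * dist p.1.1 p.1.2 ≤ h p.1.1 - h p.1.2) :
    ∃ s : ℝ, μ (A \ calibrated (roundedShift h s)) ≤ 2 * n * (1 - γ) * μ Set.univ := by
  set ε : ℝ := (1 - γ) * n
  have hε : 0 < ε := mul_pos (by linarith) (by exact_mod_cast hn)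
  set K := ⌈ε⁻¹⌉₊
  have hK : 0 < K := Nat.ceil_pos.mpr (inv_pos.mpr hε)
  have hKε : 1 ≤ K * ε := (inv_le_iff_one_le_mul₀ hε).mp (Nat.le_ceil _)
  set m := ⌊K * ε + 1⌋₊
  have hsum := hμ.sum_le_mul_univ_of_card_le m _ fun p _ ht =>
    Nat.le_floor (card_shifts_not_calibrated_le hd hγ1 hh hhA hK p ht)
  have havg : ∑ _j : Fin K, (m : ℝ) * μ Set.univ / K = m * μ Set.univ := by
    rw [sum_const, card_univ, Fintype.card_fin, nsmul_eq_mul]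
    field_simp
  obtain ⟨j, -, hj⟩ := exists_le_of_sum_le (univ_nonempty_iff.mpr ⟨⟨0, hK⟩⟩)
    (hsum.trans_eq havg.symm)
  refine ⟨j / K, hj.trans ?_⟩
  have hm : (m : ℝ) ≤ K * ε + 1 := Nat.floor_le (by positivity)
  have hU := hμ.nonneg Set.univ
  rw [div_le_iff₀ (by exact_mod_cast hK)]
  nlinarith

theorem stmt3_general (n : ℕ) (hd : ∀ x y : M, ∃ k : ℕ, k ≤ n ∧ dist x y = k)
    (μ : Set (Mt M) → ℝ)
    (hnonneg : ∀ A : Set (Mt M), 0 ≤ μ A)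
    (hempty : μ ∅ = 0)
    (hadd : ∀ A B : Set (Mt M), Disjoint A B → μ (A ∪ B) = μ A + μ B)
    {γ : ℝ} (hγ1 : γ < 1)
    (A : Set (Mt M)) (hA : GammaCM γ A) :
    ∃ B ⊆ A, CyclMono B ∧ μ A - 2 * n * (1 - γ) * μ Set.univ ≤ μ B := by
  have hμ : IsAdditiveContent μ := ⟨hnonneg, hempty, hadd⟩
  obtain rfl | ⟨p₀, hp₀⟩ := A.eq_empty_or_nonempty
  · refine ⟨∅, subset_rfl, fun _ _ hp => (hp 0).elim, ?_⟩
    have : 0 ≤ 2 * n * (1 - γ) * μ Set.univ := mul_nonneg (by nlinarith) (hnonneg _)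
    linarith
  have hn : 0 < n := by
    obtain ⟨k, hkn, hk⟩ := hd p₀.1.1 p₀.1.2
    have : (0 : ℝ) < k := hk ▸ dist_pos.mpr p₀.2
    exact (Nat.cast_pos.mp this).trans_le hkn
  obtain ⟨h, hh, hhA⟩ := hA.exists_potential
  obtain ⟨s, hs⟩ := exists_shift_measure_diff_calibrated_le hμ hn hd hγ1 hh hhA
  refine ⟨A ∩ calibrated (roundedShift h s), Set.inter_subset_left,
    cyclMono_of_subset_calibrated (roundedShift_sub_le ?_ hh s) Set.inter_subset_right, ?_⟩
  · exact fun x y => (hd x y).imp fun _ => And.right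
  · linarith [hμ.inter_add_diff A (calibrated (roundedShift h s))]

theorem stmt3 (n : ℕ) (hd : ∀ x y : M, ∃ k : ℕ, k ≤ n ∧ dist x y = k)
    (μ : Set (Mt M) → ℝ)
    (hnonneg : ∀ A : Set (Mt M), 0 ≤ μ A)
    (hbdd : ∃ C : ℝ, ∀ A : Set (Mt M), μ A ≤ C)
    (hempty : μ ∅ = 0)
    (hadd : ∀ A B : Set (Mt M), Disjoint A B → μ (A ∪ B) = μ A + μ B)
    {γ : ℝ} (hγ0 : 0 < γ) (hγ1 : γ < 1)
    (A : Set (Mt M)) (hA : GammaCM γ A) :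
    ∃ B ⊆ A, CyclMono B ∧ μ A - 2 * n * (1 - γ) * μ Set.univ ≤ μ B :=
  stmt3_general n hd μ hnonneg hempty hadd hγ1 A hA
end

section
/- Let M be a pointed metric space, let Λ be a positive bounded linear functional on ℓ∞(M̃) with ‖Λ∘Φ‖ = ‖Λ‖ = 1, let α > 0, let f belong to the slice S(Λ∘Φ, α²) of the unit ball of Lip_0(M), and let A = {(x,y) ∈ M̃ : f(m_{x,y}) ≥ 1−α}. Then Λ(A) ≥ 1−α. -/
open scoped ENNReal

variable {M : Type*} [MetricSpace M]

variable {M : Type*} [MetricSpace M]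

section PositiveFunctional

variable {M : Type*} {Λ : ellInfty M →L[ℝ] ℝ}

theorem indicLp_apply (A : Set (Mt M)) (p : Mt M) :
    (indicLp A : Mt M → ℝ) p = A.indicator 1 p :=
  rfl

theorem IsPositive.mono (hΛ : IsPositive Λ) {g h : ellInfty M} (hgh : ∀ p, g p ≤ h p) :
    Λ g ≤ Λ h := by
  have : 0 ≤ Λ (h - g) := hΛ _ fun p => by
    rw [lp.coeFn_sub, Pi.sub_apply, sub_nonneg]
    exact hgh p
  rwa [map_sub, sub_nonneg] at this

theorem IsPositive.apply_indicLp_nonneg (hΛ : IsPositive Λ) (A : Set (Mt M)) :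
    0 ≤ Λ (indicLp A) :=
  hΛ _ fun p => by
    rw [indicLp_apply]
    exact Set.indicator_nonneg (fun _ _ => zero_le_one) p

theorem apply_indicLp_le_one (hΛ : ‖Λ‖ ≤ 1) (A : Set (Mt M)) : Λ (indicLp A) ≤ 1 := by
  have hA : ‖indicLp A‖ ≤ 1 := lp.norm_le_of_forall_le zero_le_one fun p => by
    rw [indicLp_apply]
    by_cases hp : p ∈ A <;> simp [hp]
  calc Λ (indicLp A) ≤ ‖Λ‖ * ‖indicLp A‖ := (le_abs_self _).trans (Λ.le_opNorm _)
    _ ≤ 1 := mul_le_one₀ hΛ (norm_nonneg _) hA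

theorem le_smul_indicLp_add_smul_indicLp_univ {g : ellInfty M} (hg : ∀ p, g p ≤ 1) (α : ℝ) :
    ∀ p, g p ≤ (α • indicLp {p | 1 - α ≤ g p} + (1 - α) • indicLp Set.univ : ellInfty M) p := by
  intro p
  simp only [lp.coeFn_add, lp.coeFn_smul, Pi.add_apply, Pi.smul_apply, indicLp_apply,
    smul_eq_mul, Set.indicator_univ, Pi.one_apply, mul_one]
  by_cases hp : 1 - α ≤ g p
  · rw [Set.indicator_of_mem (show p ∈ {p | 1 - α ≤ g p} from hp), Pi.one_apply]
    linarith [hg p]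
  · rw [Set.indicator_of_notMem (show p ∉ {p | 1 - α ≤ g p} from hp), mul_zero]
    linarith

/-- Markov's inequality for `1 - g`, in the form `Λ g ≤ α Λ(𝟙_A) + (1 - α) Λ(𝟙)`. -/
theorem IsPositive.one_sub_le_apply_indicLp (hΛ : IsPositive Λ) (hnorm : ‖Λ‖ ≤ 1)
    {g : ellInfty M} (hg : ∀ p, g p ≤ 1) {α : ℝ} (hα : 0 < α) (hΛg : 1 - α ^ 2 < Λ g) :
    1 - α ≤ Λ (indicLp {p | 1 - α ≤ g p}) := by
  set A := {p | 1 - α ≤ g p}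
  rcases le_or_gt 1 α with h1α | hα1
  · linarith [hΛ.apply_indicLp_nonneg A]
  have hsplit : Λ g ≤ α * Λ (indicLp A) + (1 - α) * Λ (indicLp Set.univ) := by
    simpa only [map_add, map_smul, smul_eq_mul] using
      hΛ.mono (le_smul_indicLp_add_smul_indicLp_univ hg α)
  have huniv : (1 - α) * Λ (indicLp Set.univ) ≤ 1 - α :=
    mul_le_of_le_one_right (by linarith) (apply_indicLp_le_one hnorm _)
  have : α * (1 - α) < α * Λ (indicLp A) := by linarith
  linarith [lt_of_mul_lt_mul_left this hα.le]

end PositiveFunctional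

theorem stmt5_general (base : M) (Λ : ellInfty M →L[ℝ] ℝ) (hΛ : IsPositive Λ)
    (hnorm : ‖Λ‖ = 1)
    (α : ℝ) (hα : 0 < α) (f : ↥(LipO M base)) (hf1 : ‖f‖ ≤ 1)
    (hfs : 1 - α ^ 2 < Λ.comp (LipO M base).subtypeL f) :
    1 - α ≤ Λ (indicLp {p : Mt M | 1 - α ≤ ((f : ellInfty M) : Mt M → ℝ) p}) := by
  have hf : ∀ p, (f : ellInfty M) p ≤ 1 := fun p =>
    (le_abs_self _).trans ((lp.norm_apply_le_norm ENNReal.top_ne_zero _ p).trans hf1)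
  exact hΛ.one_sub_le_apply_indicLp hnorm.le hf hα hfs

theorem stmt5 (base : M) (Λ : ellInfty M →L[ℝ] ℝ) (hΛ : IsPositive Λ)
    (hopt : ‖Λ.comp (LipO M base).subtypeL‖ = 1) (hnorm : ‖Λ‖ = 1)
    (α : ℝ) (hα : 0 < α) (f : ↥(LipO M base)) (hf1 : ‖f‖ ≤ 1)
    (hfs : 1 - α ^ 2 < Λ.comp (LipO M base).subtypeL f) :
    1 - α ≤ Λ (indicLp {p : Mt M | 1 - α ≤ ((f : ellInfty M) : Mt M → ℝ) p}) :=
  stmt5_general base Λ hΛ hnorm α hα f hf1 hfs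
end

section
/- Let M be a pointed metric space. The space Lip_0(M) has the w*-D2P if and only if M has the Lip-LTP. -/
open scoped ENNReal

variable {M : Type*} [MetricSpace M]

variable {M : Type*} [MetricSpace M]

/-- `Lip₀(M)` has the weak-star diameter 2 property: every nonempty relatively
weak-star open subset of the closed unit ball has diameter 2. -/
def WstarD2P (M : Type*) [MetricSpace M] (base : M) : Prop :=
  ∀ U : Set ↥(LipO M base), U.Nonempty →
    (∃ V : Set ↥(LipO M base), @IsOpen _ (wstar M base) V ∧
      U = V ∩ {g : ↥(LipO M base) | ‖g‖ ≤ 1}) →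
    Metric.diam U = 2

/-- `M` has the Lip-LTP. -/
def LipLTP (M : Type*) [MetricSpace M] (base : M) : Prop :=
  ∀ N : Finset M, ∀ ε : ℝ, 0 < ε → ∀ f : M → ℝ, f base = 0 → LipschitzWith 1 f →
    ∃ u v : M, u ≠ v ∧ ∀ x ∈ N, ∀ y ∈ N,
      (1 - ε) * (|f x - f y| + dist u v) ≤ dist x u + dist y v

/-!
Identify `Lip₀(M)` with its de Leeuw image in `ℓ∞(M̃)`: the unit ball then consists of the
`1`-Lipschitz functions vanishing at `base`. Every element of `F(M)` is a norm limit of finite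
combinations of evaluations `δ_x`, so on norm-bounded sets a weak-star neighbourhood of `f₀`
contains all functions that are uniformly close to `f₀` on a finite set `N`.

If `M` has the Lip-LTP, apply it to `N` and `f₀`: the resulting inequality is exactly what allows
`(1 - ε) f₀`, restricted to `N`, to be extended to `1`-Lipschitz functions `F₁`, `F₂` whose slopes
from `u` to `v` are at least `1 - ε` and at most `-(1 - ε)`. Both lie in the neighbourhood, and
their distance is at least `2 (1 - ε)`.

If the Lip-LTP fails for `N`, `ε` and `f`, then for each pair `u ≠ v` some `x, y ∈ N` force every
`1`-Lipschitz `g` that is `η`-close to `f` on `N` to have slope at most `1 - ε + 2η / d(u, v)`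
from `u` to `v` (or from `v` to `u`). Since `d(u, v)` is at least `ε / 2` times the separation
of `N`, the weak-star neighbourhood `{g : |g - f| < η on N}` of `f` has diameter at most
`2 - ε / 2`.
-/

open scoped NNReal
open Topology

theorem Finset.exists_pos_forall_lt {ι : Type*} (I : Finset ι) {r : ι → ℝ}
    (hr : ∀ i ∈ I, 0 < r i) : ∃ δ > 0, ∀ i ∈ I, δ < r i := by
  obtain ⟨δ, hδ, hδ0⟩ := (((I.eventually_all.2 fun i hi => eventually_lt_nhds (hr i hi)).filter_mono
    nhdsWithin_le_nhds).and (self_mem_nhdsWithin : ∀ᶠ δ in 𝓝[>] (0 : ℝ), 0 < δ)).exists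
  exact ⟨δ, hδ0, hδ⟩

theorem Finset.exists_pos_forall_le_dist {M : Type*} [MetricSpace M] (N : Finset M) :
    ∃ m > 0, ∀ x ∈ N, ∀ y ∈ N, x ≠ y → m ≤ dist x y := by
  obtain ⟨C, hC, h⟩ := N.finite_toSet.relatively_discrete
  refine ⟨(min C 1).toReal, ENNReal.toReal_pos (by positivity) (by simp), fun x hx y hy hxy => ?_⟩
  rw [dist_edist]
  exact ENNReal.toReal_mono (edist_ne_top x y) ((min_le_left _ _).trans (h x hx y hy hxy))

section Extension

variable {M : Type*} [PseudoMetricSpace M]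

/-- `F` is the smallest `1`-Lipschitz extension of `φ` from `N ∪ {u}`, where `u` gets the largest
value compatible with `φ` on `N`; the hypothesis `h` is what makes `F` drop by `s` from `u` to
`v`. -/
theorem exists_lipschitzWith_eqOn_le_sub (N : Finset M) (hN : N.Nonempty) {φ : M → ℝ}
    (hφ : LipschitzOnWith 1 φ N) {u v : M} {s : ℝ} (hs : s ≤ dist u v)
    (h : ∀ x ∈ N, ∀ y ∈ N, φ x - φ y + s ≤ dist y u + dist x v) :
    ∃ F : M → ℝ, LipschitzWith 1 F ∧ Set.EqOn F φ N ∧ s ≤ F u - F v := by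
  set c := N.inf' hN fun y => φ y + dist y u
  have hsup : LipschitzWith 1 fun t => N.sup' hN fun x => φ x - dist x t :=
    LipschitzWith.of_le_add fun a b => Finset.sup'_le _ _ fun x hx => by
      have := Finset.le_sup' (fun x => φ x - dist x b) hx
      linarith [dist_triangle x a b]
  have hφ' : ∀ x ∈ N, ∀ y ∈ N, φ x ≤ φ y + dist x y := fun x hx y hy => by
    simpa using hφ.le_add_mul hx hy
  refine ⟨fun t => max (N.sup' hN fun x => φ x - dist x t) (c - dist t u),
    by simpa using hsup.max ((LipschitzWith.const c).sub (LipschitzWith.dist_left u)),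
    fun y hy => ?_, ?_⟩
  · refine le_antisymm (max_le (Finset.sup'_le _ _ fun x hx => ?_) ?_) ?_
    · linarith [hφ' x hx y hy]
    · linarith [Finset.inf'_le (fun y => φ y + dist y u) hy]
    · exact le_max_of_le_left (Finset.le_sup'_of_le _ hy (by simp))
  · have hu : c ≤ max (N.sup' hN fun x => φ x - dist x u) (c - dist u u) := by simp
    have hv : max (N.sup' hN fun x => φ x - dist x v) (c - dist v u) ≤ c - s := by
      refine max_le (Finset.sup'_le _ _ fun x hx => ?_) (by linarith [dist_comm u v])
      have : φ x - dist x v + s ≤ c := Finset.le_inf' hN _ fun y hy => by linarith [h x hx y hy]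
      linarith
    linarith

theorem exists_lipschitzWith_pair (N : Finset M) (hN : N.Nonempty) {φ : M → ℝ}
    (hφ : LipschitzOnWith 1 φ N) {u v : M} {s : ℝ} (hs : s ≤ dist u v)
    (h : ∀ x ∈ N, ∀ y ∈ N, |φ x - φ y| + s ≤ dist x u + dist y v) :
    ∃ F₁ F₂ : M → ℝ, LipschitzWith 1 F₁ ∧ LipschitzWith 1 F₂ ∧ Set.EqOn F₁ φ N ∧
      Set.EqOn F₂ φ N ∧ 2 * s ≤ (F₁ u - F₂ u) - (F₁ v - F₂ v) := by
  obtain ⟨F₁, hF₁, hF₁φ, hF₁uv⟩ := exists_lipschitzWith_eqOn_le_sub N hN hφ hs fun x hx y hy => by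
    linarith [h y hy x hx, neg_abs_le (φ y - φ x)]
  obtain ⟨G, hG, hGφ, hGuv⟩ := exists_lipschitzWith_eqOn_le_sub N hN hφ.neg hs fun x hx y hy => by
    linarith [h y hy x hx, le_abs_self (φ y - φ x), show (-φ) x - (-φ) y = φ y - φ x by simp; ring]
  refine ⟨F₁, -G, hF₁, hG.neg, hF₁φ, fun x hx => by simp [hGφ hx], ?_⟩
  simp only [Pi.neg_apply]
  linarith

end Extension

/-! In this section `(x, y)` witnesses the failure of the Lip-LTP inequality at `(u, v)`. -/
section Witness

variable {M : Type*} [PseudoMetricSpace M] {f g g' : M → ℝ} {x y u v : M} {ε η : ℝ}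

theorem ne_of_dist_add_dist_lt (hε : 0 ≤ ε)
    (hw : dist x u + dist y v < (1 - ε) * (|f x - f y| + dist u v)) : x ≠ y := by
  rintro rfl
  rw [sub_self, abs_zero, zero_add] at hw
  nlinarith [dist_triangle u x v, dist_comm x u, dist_nonneg (x := u) (y := v)]

theorem mul_dist_lt_of_dist_add_dist_lt (hε : 0 ≤ ε) (hf : LipschitzWith 1 f)
    (hw : dist x u + dist y v < (1 - ε) * (|f x - f y| + dist u v)) :
    ε * dist x y < 2 * dist u v := by
  have hε1 : 0 < 1 - ε := by
    by_contra! h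
    nlinarith [dist_nonneg (x := x) (y := u), dist_nonneg (x := y) (y := v),
      abs_nonneg (f x - f y), dist_nonneg (x := u) (y := v)]
  have hfxy : |f x - f y| ≤ dist x y := by simpa [Real.dist_eq] using hf.dist_le_mul x y
  nlinarith [mul_le_mul_of_nonneg_left hfxy hε1.le, dist_triangle4 x u v y, dist_comm v y,
    dist_nonneg (x := u) (y := v)]

theorem sub_lt_of_dist_add_dist_lt (hε : 0 ≤ ε) (hg : LipschitzWith 1 g)
    (hx : |g x - f x| < η) (hy : |g y - f y| < η) (hfxy : f x ≤ f y)
    (hw : dist x u + dist y v < (1 - ε) * (|f x - f y| + dist u v)) :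
    g u - g v < (1 - ε) * dist u v + 2 * η := by
  rw [abs_of_nonpos (sub_nonpos.2 hfxy)] at hw
  have hux : g u ≤ g x + dist u x := by simpa using hg.le_add_mul u x
  have hyv : g y ≤ g v + dist y v := by simpa using hg.le_add_mul y v
  rw [abs_lt] at hx hy
  nlinarith [dist_comm u x, mul_nonneg hε (sub_nonneg.2 hfxy)]

theorem sub_sub_sub_lt_of_dist_add_dist_lt (hε : 0 ≤ ε) (hg : LipschitzWith 1 g)
    (hg' : LipschitzWith 1 g') (hgx : |g x - f x| < η) (hgy : |g y - f y| < η)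
    (hg'x : |g' x - f x| < η) (hg'y : |g' y - f y| < η)
    (hw : dist x u + dist y v < (1 - ε) * (|f x - f y| + dist u v)) :
    (g u - g v) - (g' u - g' v) < (2 - ε) * dist u v + 2 * η := by
  rcases le_total (f x) (f y) with hfxy | hfyx
  · have := sub_lt_of_dist_add_dist_lt hε hg hgx hgy hfxy hw
    have : g' v ≤ g' u + dist v u := by simpa using hg'.le_add_mul v u
    linarith [dist_comm u v]
  · have hw' : dist y v + dist x u < (1 - ε) * (|f y - f x| + dist v u) := by
      rwa [abs_sub_comm, dist_comm v u, add_comm (dist y v)]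
    have hsub := sub_lt_of_dist_add_dist_lt hε hg' hg'y hg'x hfyx hw'
    have : g u ≤ g v + dist u v := by simpa using hg.le_add_mul u v
    rw [dist_comm v u] at hsub
    linarith

end Witness

namespace LipO

variable {M : Type*} [MetricSpace M] {base : M}

theorem deltaF_apply_of_forall_eq (g : LipO M base) {f : M → ℝ} (hf0 : f base = 0)
    (hg : ∀ p : Mt M, (g : ellInfty M) p = (f p.1.1 - f p.1.2) / dist p.1.1 p.1.2) (x : M) :
    deltaF base x g = f x := by
  change evalAux base x g = f x
  unfold evalAux
  split_ifs with hx
  · rw [hx, hf0]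
  · rw [hg ⟨(x, base), hx⟩, hf0, sub_zero, div_mul_cancel₀ _ (dist_ne_zero.2 hx)]

@[simp]
theorem deltaF_self (g : LipO M base) : deltaF base base g = 0 := by
  change evalAux base base g = 0
  simp [evalAux]

theorem coe_apply (g : LipO M base) (p : Mt M) :
    (g : ellInfty M) p = (deltaF base p.1.1 g - deltaF base p.1.2 g) / dist p.1.1 p.1.2 := by
  obtain ⟨f, hf0, hg⟩ := g.2
  simp only [deltaF_apply_of_forall_eq g hf0 hg]
  exact hg p

theorem norm_le_of_forall_sub_le (g : LipO M base) {C : ℝ} (hC : 0 ≤ C)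
    (h : ∀ a b, deltaF base a g - deltaF base b g ≤ C * dist a b) : ‖g‖ ≤ C := by
  refine lp.norm_le_of_forall_le hC fun p => ?_
  have hp : 0 < dist p.1.1 p.1.2 := dist_pos.2 p.2
  change ‖(g : ellInfty M) p‖ ≤ C
  rw [Real.norm_eq_abs, coe_apply, abs_div, abs_of_pos hp, div_le_iff₀ hp, abs_sub_le_iff]
  exact ⟨h _ _, dist_comm p.1.1 p.1.2 ▸ h _ _⟩

theorem sub_le_norm_mul_dist (g : LipO M base) (a b : M) :
    deltaF base a g - deltaF base b g ≤ ‖g‖ * dist a b := by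
  rcases eq_or_ne a b with rfl | hab
  · simp
  let p : Mt M := ⟨(a, b), hab⟩
  have hp : 0 < dist a b := dist_pos.2 hab
  have h : |(g : ellInfty M) p| ≤ ‖g‖ :=
    lp.norm_apply_le_norm ENNReal.top_ne_zero (g : ellInfty M) p
  rw [coe_apply, abs_div, abs_of_pos hp, div_le_iff₀ hp] at h
  exact (le_abs_self _).trans h

theorem lipschitzWith_deltaF (g : LipO M base) :
    LipschitzWith ‖g‖₊ fun x => deltaF base x g :=
  LipschitzWith.of_le_add_mul _ fun a b => by
    rw [coe_nnnorm]
    linarith [sub_le_norm_mul_dist g a b]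

theorem norm_le_iff_lipschitzWith (g : LipO M base) (K : ℝ≥0) :
    ‖g‖ ≤ K ↔ LipschitzWith K fun x => deltaF base x g :=
  ⟨fun h => (lipschitzWith_deltaF g).weaken (by exact_mod_cast h), fun h =>
    norm_le_of_forall_sub_le g K.2 fun a b => by linarith [h.le_add_mul a b]⟩

theorem dist_le_of_forall_sub_le {g g' : LipO M base} {C : ℝ} (hC : 0 ≤ C)
    (h : ∀ a b, (deltaF base a g - deltaF base a g') - (deltaF base b g - deltaF base b g') ≤
      C * dist a b) : dist g g' ≤ C := by
  rw [dist_eq_norm]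
  exact norm_le_of_forall_sub_le _ hC (by simpa only [map_sub] using h)

theorem le_dist_of_mul_dist_le {g g' : LipO M base} {u v : M} (huv : u ≠ v) {C : ℝ}
    (h : C * dist u v ≤
      (deltaF base u g - deltaF base u g') - (deltaF base v g - deltaF base v g')) :
    C ≤ dist g g' := by
  have := sub_le_norm_mul_dist (g - g') u v
  simp only [map_sub] at this
  rw [dist_eq_norm]
  exact le_of_mul_le_mul_right (h.trans this) (dist_pos.2 huv)

noncomputable def ofLipschitz (f : M → ℝ) (hf0 : f base = 0) {K : ℝ≥0} (hf : LipschitzWith K f) :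
    LipO M base :=
  ⟨⟨fun p => (f p.1.1 - f p.1.2) / dist p.1.1 p.1.2, memℓp_infty ⟨K, by
    rintro _ ⟨p, rfl⟩
    dsimp only
    have hp : 0 < dist p.1.1 p.1.2 := dist_pos.2 p.2
    rw [Real.norm_eq_abs, abs_div, abs_of_pos hp, div_le_iff₀ hp, ← Real.dist_eq]
    exact hf.dist_le_mul _ _⟩⟩, f, hf0, fun _ => rfl⟩

@[simp]
theorem deltaF_ofLipschitz (f : M → ℝ) (hf0 : f base = 0) {K : ℝ≥0} (hf : LipschitzWith K f)
    (x : M) : deltaF base x (ofLipschitz f hf0 hf) = f x :=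
  deltaF_apply_of_forall_eq _ hf0 (fun _ => rfl) x

theorem norm_ofLipschitz_le (f : M → ℝ) (hf0 : f base = 0) {K : ℝ≥0} (hf : LipschitzWith K f) :
    ‖ofLipschitz f hf0 hf‖ ≤ K :=
  (norm_le_iff_lipschitzWith _ K).2 (by simpa only [deltaF_ofLipschitz] using hf)

theorem deltaF_mem_freeSp (x : M) : deltaF base x ∈ FreeSp M base :=
  subset_closure (Submodule.subset_span (Set.mem_range_self x))

theorem isOpen_wstar_setOf_forall_abs_sub_lt (N : Finset M) (φ : M → ℝ) (η : ℝ) :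
    IsOpen[wstar M base] {g | ∀ x ∈ N, |deltaF base x g - φ x| < η} := by
  have : IsOpen {ψ : FreeSp M base → ℝ |
      ∀ x ∈ N, |ψ ⟨deltaF base x, deltaF_mem_freeSp x⟩ - φ x| < η} := by
    simp only [Set.ofPred_forall]
    exact isOpen_biInter_finset fun x _ =>
      isOpen_lt ((continuous_apply _).sub continuous_const).abs continuous_const
  exact isOpen_induced this

theorem exists_finset_forall_abs_sub_lt {μ : LipO M base →L[ℝ] ℝ} (hμ : μ ∈ FreeSp M base)
    (f₀ : LipO M base) (R : ℝ) {r : ℝ} (hr : 0 < r) :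
    ∃ N : Finset M, ∃ δ > 0, ∀ g, dist g f₀ ≤ R →
      (∀ x ∈ N, |deltaF base x g - deltaF base x f₀| < δ) → |μ g - μ f₀| < r := by
  have hμ' : μ ∈ closure (FreeSpan M base : Set (LipO M base →L[ℝ] ℝ)) := hμ
  obtain ⟨ν, hν, hμν⟩ := (Metric.mem_closure_iff (α := LipO M base →L[ℝ] ℝ)).1 hμ'
    (r / (2 * (|R| + 1))) (by positivity)
  obtain ⟨c, rfl⟩ := Finsupp.mem_span_range_iff_exists_finsupp.1 hν
  set S := ∑ x ∈ c.support, |c x|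
  have hS : 0 ≤ S := Finset.sum_nonneg fun x _ => abs_nonneg (c x)
  refine ⟨c.support, r / (2 * (S + 1)), by positivity, fun g hg hN => ?_⟩
  set ν := c.sum fun x t => t • deltaF base x
  have hfar : |(μ - ν) (g - f₀)| < r / 2 := calc
    |(μ - ν) (g - f₀)| ≤ ‖μ - ν‖ * ‖g - f₀‖ := (μ - ν).le_opNorm _
    _ ≤ ‖μ - ν‖ * (|R| + 1) := by
      gcongr
      rw [← dist_eq_norm]
      linarith [le_abs_self R]
    _ < r / (2 * (|R| + 1)) * (|R| + 1) := by
      gcongr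
      exact (dist_eq_norm μ ν).symm.trans_lt hμν
    _ = r / 2 := by field_simp
  have hnear : |ν (g - f₀)| < r / 2 := calc
    |ν (g - f₀)| = |∑ x ∈ c.support, c x * (deltaF base x g - deltaF base x f₀)| := by
      simp [ν, Finsupp.sum, mul_sub, Finset.sum_sub_distrib]
    _ ≤ ∑ x ∈ c.support, |c x| * (r / (2 * (S + 1))) := by
      refine (Finset.abs_sum_le_sum_abs _ _).trans (Finset.sum_le_sum fun x hx => ?_)
      rw [abs_mul]
      gcongr
      exact (hN x hx).le
    _ = S * (r / (2 * (S + 1))) := (Finset.sum_mul ..).symm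
    _ < r / 2 := by
      rw [← mul_div_assoc, div_lt_div_iff₀ (by positivity) two_pos]
      nlinarith
  have hsplit : μ g - μ f₀ = (μ - ν) (g - f₀) + ν (g - f₀) := by
    simp only [map_sub, sub_apply]
    ring
  rw [hsplit]
  exact (abs_add_le _ _).trans_lt (by linarith)

theorem exists_finset_of_isOpen_wstar {V : Set (LipO M base)} (hV : IsOpen[wstar M base] V)
    {f₀ : LipO M base} (hf₀ : f₀ ∈ V) (R : ℝ) :
    ∃ N : Finset M, ∃ δ > 0, ∀ g, dist g f₀ ≤ R →
      (∀ x ∈ N, |deltaF base x g - deltaF base x f₀| < δ) → g ∈ V := by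
  classical
  obtain ⟨W, hW, rfl⟩ := isOpen_induced_iff.1 hV
  obtain ⟨I, u, hu, hIu⟩ := isOpen_pi_iff.1 hW _ hf₀
  have hcoord : ∀ μ ∈ I, ∃ N : Finset M, ∃ δ, 0 < δ ∧ ∀ g, dist g f₀ ≤ R →
      (∀ x ∈ N, |deltaF base x g - deltaF base x f₀| < δ) → (μ : LipO M base →L[ℝ] ℝ) g ∈ u μ := by
    intro μ hμ
    obtain ⟨r, hr, hball⟩ := Metric.isOpen_iff.1 (hu μ hμ).1 _ (hu μ hμ).2
    obtain ⟨N, δ, hδ, h⟩ := exists_finset_forall_abs_sub_lt μ.2 f₀ R hr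
    exact ⟨N, δ, hδ, fun g hg hN => hball (by simpa [Real.dist_eq] using h g hg hN)⟩
  choose! N δ hδ hN using hcoord
  obtain ⟨δ₀, hδ₀, hδ₀δ⟩ := I.exists_pos_forall_lt hδ
  refine ⟨I.biUnion N, δ₀, hδ₀, fun g hg hgN => hIu fun μ hμ => hN μ hμ g hg fun x hx => ?_⟩
  exact (hgN x (Finset.mem_biUnion.2 ⟨μ, hμ, hx⟩)).trans (hδ₀δ μ hμ)

theorem diam_inter_unitBall_le_two (V : Set (LipO M base)) :
    Metric.diam (V ∩ {g | ‖g‖ ≤ 1}) ≤ 2 :=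
  Metric.diam_le_of_forall_dist_le zero_le_two fun g hg g' hg' => by
    rw [dist_eq_norm]
    linarith [norm_sub_le g g', show ‖g‖ ≤ 1 from hg.2, show ‖g'‖ ≤ 1 from hg'.2]

theorem _root_.LipLTP.exists_lipschitzWith_pair (hLTP : LipLTP M base) (N : Finset M)
    (hN : N.Nonempty) {ε : ℝ} (hε : 0 < ε) (hε1 : ε ≤ 1) {h : M → ℝ} (h0 : h base = 0)
    (hh : LipschitzWith 1 h) :
    ∃ u v : M, u ≠ v ∧ ∃ F₁ F₂ : M → ℝ, LipschitzWith 1 F₁ ∧ LipschitzWith 1 F₂ ∧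
      Set.EqOn F₁ (fun x => (1 - ε) * h x) N ∧ Set.EqOn F₂ (fun x => (1 - ε) * h x) N ∧
      2 * ((1 - ε) * dist u v) ≤ (F₁ u - F₂ u) - (F₁ v - F₂ v) := by
  obtain ⟨u, v, huv, hT⟩ := hLTP N ε hε h h0 hh
  have hφ : LipschitzWith 1 fun x => (1 - ε) * h x := LipschitzWith.of_le_add fun a b => by
    have := hh.le_add_mul a b
    rw [NNReal.coe_one, one_mul] at this
    nlinarith [mul_le_mul_of_nonneg_left this (sub_nonneg.2 hε1), dist_nonneg (x := a) (y := b)]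
  refine ⟨u, v, huv, _root_.exists_lipschitzWith_pair N hN hφ.lipschitzOnWith
    (s := (1 - ε) * dist u v) (by nlinarith [dist_nonneg (x := u) (y := v)]) fun x hx y hy => ?_⟩
  rw [← mul_sub, abs_mul, abs_of_nonneg (by linarith), ← mul_add]
  exact hT x hx y hy

theorem exists_far_pair_of_lipLTP (hLTP : LipLTP M base) {V : Set (LipO M base)}
    (hV : IsOpen[wstar M base] V) {f₀ : LipO M base} (hf₀ : f₀ ∈ V ∩ {g | ‖g‖ ≤ 1}) {c : ℝ}
    (hc : 0 < c) : ∃ g₁ ∈ V ∩ {g | ‖g‖ ≤ 1}, ∃ g₂ ∈ V ∩ {g | ‖g‖ ≤ 1}, 2 - c ≤ dist g₁ g₂ := by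
  classical
  obtain ⟨N, δ, hδ, hN⟩ := exists_finset_of_isOpen_wstar hV hf₀.1 2
  set h₀ := fun x => deltaF base x f₀
  set S := ∑ x ∈ N, |h₀ x|
  have hS : 0 ≤ S := Finset.sum_nonneg fun x _ => abs_nonneg _
  -- `ε` is small enough that shrinking `h₀` by the factor `1 - ε` keeps it `δ`-close on `N`
  set ε := min (min (c / 2) 1) (δ / (S + 1))
  have hε : 0 < ε := lt_min (lt_min (half_pos hc) one_pos) (by positivity)
  have hε1 : ε ≤ 1 := (min_le_left _ _).trans (min_le_right _ _)
  have hεc : ε ≤ c / 2 := (min_le_left _ _).trans (min_le_left _ _)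
  have hεN : ∀ x ∈ N, ε * |h₀ x| < δ := fun x hx => calc
    ε * |h₀ x| ≤ δ / (S + 1) * S := by
      gcongr
      exacts [min_le_right _ _, Finset.single_le_sum (fun y _ => abs_nonneg (h₀ y)) hx]
    _ < δ := by rw [div_mul_eq_mul_div, div_lt_iff₀ (by positivity)]; nlinarith
  obtain ⟨u, v, huv, F₁, F₂, hF₁, hF₂, hF₁h₀, hF₂h₀, hF⟩ :=
    hLTP.exists_lipschitzWith_pair (insert base N) (Finset.insert_nonempty _ _) hε hε1
      (deltaF_self f₀) ((norm_le_iff_lipschitzWith f₀ 1).1 (by simpa using hf₀.2))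
  have hmem : ∀ F : M → ℝ, (hF : LipschitzWith 1 F) →
      Set.EqOn F (fun x => (1 - ε) * h₀ x) (insert base N : Finset M) →
      ∃ hF0 : F base = 0, ofLipschitz F hF0 hF ∈ V ∩ {g | ‖g‖ ≤ 1} := fun F hF hFh₀ => by
    have hF0 : F base = 0 := by simp [hFh₀ (Finset.mem_insert_self base N), h₀]
    have hnorm : ‖ofLipschitz F hF0 hF‖ ≤ 1 := by exact_mod_cast norm_ofLipschitz_le F hF0 hF
    refine ⟨hF0, hN _ ?_ fun x hx => ?_, hnorm⟩
    · rw [dist_eq_norm]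
      linarith [norm_sub_le (ofLipschitz F hF0 hF) f₀, show ‖f₀‖ ≤ 1 from hf₀.2]
    · rw [deltaF_ofLipschitz, hFh₀ (Finset.mem_insert_of_mem hx)]
      have : (1 - ε) * h₀ x - h₀ x = -(ε * h₀ x) := by ring
      rw [this, abs_neg, abs_mul, abs_of_pos hε]
      exact hεN x hx
  obtain ⟨hF₁0, hg₁⟩ := hmem F₁ hF₁ hF₁h₀
  obtain ⟨hF₂0, hg₂⟩ := hmem F₂ hF₂ hF₂h₀
  refine ⟨_, hg₁, _, hg₂, le_dist_of_mul_dist_le huv ?_⟩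
  simp only [deltaF_ofLipschitz]
  nlinarith [dist_nonneg (x := u) (y := v)]

theorem wstarD2P_of_lipLTP (hLTP : LipLTP M base) : WstarD2P M base := by
  rintro U ⟨f₀, hf₀⟩ ⟨V, hV, rfl⟩
  have hbdd : Bornology.IsBounded (V ∩ {g : LipO M base | ‖g‖ ≤ 1}) :=
    (Metric.isBounded_closedBall (x := 0) (r := 1)).subset fun g hg => by simpa using hg.2
  refine (diam_inter_unitBall_le_two V).antisymm (le_of_forall_pos_le_add fun c hc => ?_)
  obtain ⟨g₁, hg₁, g₂, hg₂, hfar⟩ := exists_far_pair_of_lipLTP hLTP hV hf₀ hc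
  linarith [Metric.dist_le_diam_of_mem hbdd hg₁ hg₂]

theorem dist_le_of_forall_exists_dist_add_dist_lt {N : Finset M} {ε m : ℝ} {f : M → ℝ}
    (hε : 0 < ε) (hε1 : ε ≤ 1) (hf : LipschitzWith 1 f)
    (hfail : ∀ u v, u ≠ v → ∃ x ∈ N, ∃ y ∈ N,
      dist x u + dist y v < (1 - ε) * (|f x - f y| + dist u v))
    (hm : ∀ x ∈ N, ∀ y ∈ N, x ≠ y → m ≤ dist x y) {g g' : LipO M base} (hg : ‖g‖ ≤ 1)
    (hg' : ‖g'‖ ≤ 1) (hgN : ∀ x ∈ N, |deltaF base x g - f x| < ε ^ 2 * m / 8)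
    (hg'N : ∀ x ∈ N, |deltaF base x g' - f x| < ε ^ 2 * m / 8) :
    dist g g' ≤ 2 - ε / 2 := by
  refine dist_le_of_forall_sub_le (by linarith) fun u v => ?_
  rcases eq_or_ne u v with rfl | huv
  · simp
  obtain ⟨x, hx, y, hy, hw⟩ := hfail u v huv
  have hlip := fun g : LipO M base => (norm_le_iff_lipschitzWith g 1).1
  have := sub_sub_sub_lt_of_dist_add_dist_lt hε.le (hlip g (by simpa using hg))
    (hlip g' (by simpa using hg')) (hgN x hx) (hgN y hy) (hg'N x hx) (hg'N y hy) hw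
  -- `ε ^ 2 * m / 8 < ε / 4 * dist u v` because `ε * dist x y < 2 * dist u v`
  have hmxy := hm x hx y hy (ne_of_dist_add_dist_lt hε.le hw)
  have := mul_dist_lt_of_dist_add_dist_lt hε.le hf hw
  nlinarith [mul_le_mul_of_nonneg_left hmxy hε.le]

theorem lipLTP_of_wstarD2P (hD2P : WstarD2P M base) : LipLTP M base := by
  by_contra hLTP
  simp only [LipLTP, not_forall, not_exists, not_and, not_le] at hLTP
  obtain ⟨N, ε, hε, f, hf0, hf, hfail⟩ := hLTP
  set ε' := min ε 1
  have hfail' : ∀ u v, u ≠ v → ∃ x ∈ N, ∃ y ∈ N,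
      dist x u + dist y v < (1 - ε') * (|f x - f y| + dist u v) := fun u v huv => by
    obtain ⟨x, hx, y, hy, hw⟩ := hfail u v huv
    exact ⟨x, hx, y, hy, hw.trans_le (by gcongr; exact min_le_left _ _)⟩
  obtain ⟨m, hm, hmN⟩ := N.exists_pos_forall_le_dist
  set V := {g : LipO M base | ∀ x ∈ N, |deltaF base x g - f x| < ε' ^ 2 * m / 8}
  have hε' : 0 < ε' := lt_min hε one_pos
  have hfV : ofLipschitz f hf0 hf ∈ V ∩ {g | ‖g‖ ≤ 1} :=
    ⟨fun x _ => by simp [hε', hm], by exact_mod_cast norm_ofLipschitz_le f hf0 hf⟩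
  have hdiam := hD2P _ ⟨_, hfV⟩ ⟨V, isOpen_wstar_setOf_forall_abs_sub_lt N f _, rfl⟩
  have : Metric.diam (V ∩ {g | ‖g‖ ≤ 1}) ≤ 2 - ε' / 2 :=
    Metric.diam_le_of_forall_dist_le (by linarith [min_le_right ε 1]) fun g hg g' hg' =>
      dist_le_of_forall_exists_dist_add_dist_lt hε' (min_le_right _ _) hf hfail' hmN hg.2 hg'.2
        hg.1 hg'.1
  linarith

end LipO

theorem stmt11 (base : M) : WstarD2P M base ↔ LipLTP M base :=
  ⟨LipO.lipLTP_of_wstarD2P, LipO.wstarD2P_of_lipLTP⟩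
end
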